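/- For every r ≥ 2, an r-pattern P (a 2-edge ordered r-matching, encoded as a word over {A,B} of length 2r with r occurrences of each letter, starting with A) is collectable if and only if P can be written as a concatenation of blocks each of the form A^t B^t or B^t A^t for various t ≥ 1. Consequently, the number of collectable r-patterns is 3^{r−1}. -/

import Mathlib

/-- The word over `{A,B}` (encoded `false` = `A`, `true` = `B`) formed by two disjoint
edges `e` (the `A`-edge) and `f` (the `B`-edge) in a linear order: list the vertices of
`e ∪ f` in increasing order and record which edge each belongs to. -/
def pairWord {α : Type*} [LinearOrder α] (e f : Finset α) : List Bool :=
  ((e ∪ f).sort (· ≤ ·)).map fun v => decide (v ∈ f)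

/-- Two edges `e, f` form (as an unordered pair) the pattern `P`. -/
def FormsPattern {α : Type*} [LinearOrder α] (P : List Bool) (e f : Finset α) : Prop :=
  pairWord e f = P ∨ pairWord f e = P

/-- An `r`-pattern: a word of length `2r` over `{A,B}` with `r` occurrences of each
letter, starting with `A` (= `false`). -/
def IsPattern (r : ℕ) (P : List Bool) : Prop :=
  P.length = 2 * r ∧ P.count true = r ∧ P.head? = some false

/-- `P` is collectable: for every `k` there is an ordered `r`-matching of size `k`
(a `P`-clique) in which every pair of edges forms the pattern `P`. -/
def Collectable (r : ℕ) (P : List Bool) : Prop :=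
  ∀ k : ℕ, ∃ M : Finset (Finset ℕ), M.card = k ∧ (∀ e ∈ M, e.card = r) ∧
    (∀ e ∈ M, ∀ f ∈ M, e ≠ f → Disjoint e f) ∧
    (∀ e ∈ M, ∀ f ∈ M, e ≠ f → FormsPattern P e f)

/-- The word obtained by concatenating blocks `A^t B^t` (when the Boolean is `false`) or
`B^t A^t` (when it is `true`). -/
def wordOfBlocks (blocks : List (ℕ × Bool)) : List Bool :=
  blocks.flatMap fun b => List.replicate b.1 b.2 ++ List.replicate b.1 (!b.2)

/-- `P` splits into consecutive blocks of the form `A^t B^t` or `B^t A^t`. -/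
def HasBlockSplitting (r : ℕ) (P : List Bool) : Prop :=
  ∃ blocks : List (ℕ × Bool), (∀ b ∈ blocks, 0 < b.1) ∧
    (blocks.map Prod.fst).sum = r ∧ P = wordOfBlocks blocks

/-!
Three edges of a `P`-clique already force the block structure. Order them as `x, y, z` by their
first vertices; all three pairs then have the merge word `P`. If `P = AᵗB…`, the pair `(y, z)`
shows that the first `t` vertices of `y` precede `z₀`, and the pair `(x, z)` that `z₀` precedes
`xₜ`; hence `P` starts with the block `AᵗBᵗ`. Deleting the first `t` vertices of every edge leaves
three edges with the rest of `P` as merge word, and induction (exchanging `x` and `z` when the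
next block starts with `B`) splits `P` into blocks.

Conversely, a block word is realised by `k` edges laid out block by block: the block `(t, b)`
gets `k * t` consecutive points, cut into `k` runs of length `t` that are handed to the edges in
increasing order, or in decreasing order when `b = B`.

Splitting into blocks is unique, so if `c m` counts block words of size `m`, the patterns of size
`n + 1` number `∑ m ≤ n, c m` and `c (n + 1)` is twice that; this sum is `3 ^ n`.
-/

def block (t : ℕ) (b : Bool) : List Bool := List.replicate t b ++ List.replicate t (!b)

@[simp]
lemma count_block (t : ℕ) (b c : Bool) : (block t b).count c = t := by
  cases b <;> cases c <;> simp [block, List.count_replicate]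

lemma map_not_block (t : ℕ) (b : Bool) : (block t b).map not = block t (!b) := by
  simp [block, List.map_replicate]

lemma head?_block_append {t : ℕ} (ht : 0 < t) (b : Bool) (V : List Bool) :
    (block t b ++ V).head? = some b := by
  obtain ⟨s, rfl⟩ := Nat.exists_eq_add_of_lt ht
  simp [block, List.replicate_succ]

lemma takeWhile_block_append {t : ℕ} (ht : 0 < t) (b : Bool) (V : List Bool) :
    (block t b ++ V).takeWhile (· == b) = List.replicate t b := by
  obtain ⟨s, rfl⟩ := Nat.exists_eq_add_of_lt ht
  simp [block, List.replicate_succ, List.takeWhile_append_of_pos]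

lemma block_append_inj {t t' : ℕ} {b b' : Bool} {V V' : List Bool} (ht : 0 < t) (ht' : 0 < t')
    (h : block t b ++ V = block t' b' ++ V') : t = t' ∧ b = b' ∧ V = V' := by
  have hb : b = b' := by
    have := congrArg List.head? h
    rwa [head?_block_append ht, head?_block_append ht', Option.some_inj] at this
  subst hb
  have htt : t = t' := by
    simpa [takeWhile_block_append, ht, ht'] using
      congrArg (fun w => (w.takeWhile (· == b)).length) h
  subst htt
  exact ⟨rfl, rfl, List.append_cancel_left h⟩

lemma wordOfBlocks_cons (t : ℕ) (b : Bool) (bs : List (ℕ × Bool)) :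
    wordOfBlocks ((t, b) :: bs) = block t b ++ wordOfBlocks bs := by
  simp [wordOfBlocks, block]

lemma HasBlockSplitting.block_append {n t : ℕ} {V : List Bool} (h : HasBlockSplitting n V)
    (ht : 0 < t) (b : Bool) : HasBlockSplitting (t + n) (block t b ++ V) := by
  obtain ⟨bs, hpos, hsum, rfl⟩ := h
  refine ⟨(t, b) :: bs, ?_, by simp [hsum], (wordOfBlocks_cons t b bs).symm⟩
  simpa [ht] using hpos

lemma HasBlockSplitting.count_eq {n : ℕ} {w : List Bool} (h : HasBlockSplitting n w) (c : Bool) :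
    w.count c = n := by
  obtain ⟨bs, -, rfl, rfl⟩ := h
  induction bs with
  | nil => rfl
  | cons p bs ih =>
    obtain ⟨t, b⟩ := p
    simp [wordOfBlocks_cons, ih]

lemma HasBlockSplitting.length_eq {n : ℕ} {w : List Bool} (h : HasBlockSplitting n w) :
    w.length = 2 * n := by
  rw [← List.count_false_add_count_true, h.count_eq, h.count_eq, two_mul]

lemma hasBlockSplitting_zero_iff {w : List Bool} : HasBlockSplitting 0 w ↔ w = [] :=
  ⟨fun h => List.eq_nil_of_length_eq_zero h.length_eq, fun h => ⟨[], by simp, rfl, h⟩⟩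

lemma exists_block_append_of_hasBlockSplitting {n : ℕ} {w : List Bool}
    (h : HasBlockSplitting (n + 1) w) :
    ∃ t b V, 0 < t ∧ t ≤ n + 1 ∧ HasBlockSplitting (n + 1 - t) V ∧ w = block t b ++ V := by
  obtain ⟨_ | ⟨⟨t, b⟩, bs⟩, hpos, hsum, rfl⟩ := h
  · simp at hsum
  · simp only [List.map_cons, List.sum_cons] at hsum
    refine ⟨t, b, wordOfBlocks bs, hpos _ List.mem_cons_self, by omega,
      ⟨bs, fun p hp => hpos p (List.mem_cons_of_mem _ hp), by omega, rfl⟩, wordOfBlocks_cons t b bs⟩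

lemma exists_eq_replicate_false_append {W : List Bool} (h : true ∈ W) :
    ∃ t V, W = List.replicate t false ++ true :: V := by
  induction W with
  | nil => simp at h
  | cons c W ih =>
    cases c
    · obtain ⟨t, V, rfl⟩ := ih (by simpa using h)
      exact ⟨t + 1, V, rfl⟩
    · exact ⟨0, W, rfl⟩

section LinearOrder

variable {α : Type*} [LinearOrder α]

/-- `pairWord` computed by merging sorted lists (`pairWord_toFinset`); unlike `pairWord` it can be
unfolded one vertex at a time. -/
def mergeWord : List α → List α → List Bool
  | [], [] => []
  | _ :: xs, [] => false :: mergeWord xs []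
  | [], _ :: ys => true :: mergeWord [] ys
  | x :: xs, y :: ys =>
      if x < y then false :: mergeWord xs (y :: ys) else true :: mergeWord (x :: xs) ys
termination_by xs ys => xs.length + ys.length

@[simp]
lemma mergeWord_nil_left (ys : List α) : mergeWord [] ys = List.replicate ys.length true := by
  induction ys with
  | nil => rw [mergeWord]; rfl
  | cons y ys ih => simp [mergeWord, ih, List.replicate_succ]

@[simp]
lemma mergeWord_nil_right (xs : List α) : mergeWord xs [] = List.replicate xs.length false := by
  induction xs with
  | nil => rw [mergeWord]; rfl
  | cons x xs ih => simp [mergeWord, ih, List.replicate_succ]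

lemma mergeWord_cons_cons (x y : α) (xs ys : List α) :
    mergeWord (x :: xs) (y :: ys) =
      if x < y then false :: mergeWord xs (y :: ys) else true :: mergeWord (x :: xs) ys := by
  rw [mergeWord]

lemma count_mergeWord (xs ys : List α) :
    (mergeWord xs ys).count false = xs.length ∧ (mergeWord xs ys).count true = ys.length := by
  fun_induction mergeWord xs ys <;> simp_all

lemma mergeWord_swap {xs ys : List α} (h : xs.Disjoint ys) :
    mergeWord ys xs = (mergeWord xs ys).map not := by
  fun_induction mergeWord xs ys with
  | case1 => simp
  | case2 | case3 => simp [List.map_replicate, List.replicate_succ]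
  | case4 x xs y ys hxy ih =>
    rw [mergeWord_cons_cons, if_neg (not_lt.2 hxy.le), ih (List.disjoint_cons_left.1 h).2]
    rfl
  | case5 x xs y ys hxy ih =>
    have hyx : y < x :=
      (not_lt.1 hxy).lt_of_ne fun e => h List.mem_cons_self (e ▸ List.mem_cons_self)
    rw [mergeWord_cons_cons, if_pos hyx, ih (List.disjoint_cons_right.1 h).2]
    rfl

lemma mergeWord_cons_left_of_forall_lt {x : α} {xs ys : List α} (h : ∀ b ∈ ys, x < b) :
    mergeWord (x :: xs) ys = false :: mergeWord xs ys := by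
  cases ys with
  | nil => simp [List.replicate_succ]
  | cons y ys => rw [mergeWord_cons_cons, if_pos (h y List.mem_cons_self)]

lemma mergeWord_cons_right_of_forall_lt {y : α} {xs ys : List α} (h : ∀ a ∈ xs, y < a) :
    mergeWord xs (y :: ys) = true :: mergeWord xs ys := by
  cases xs with
  | nil => simp [List.replicate_succ]
  | cons x xs => rw [mergeWord_cons_cons, if_neg (h x List.mem_cons_self).not_gt]

lemma mergeWord_append {x₁ y₁ x₂ y₂ : List α} (h : ∀ a ∈ x₁ ++ y₁, ∀ b ∈ x₂ ++ y₂, a < b) :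
    mergeWord (x₁ ++ x₂) (y₁ ++ y₂) = mergeWord x₁ y₁ ++ mergeWord x₂ y₂ := by
  fun_induction mergeWord x₁ y₁ with
  | case1 => simp
  | case2 x xs ih =>
    simp only [List.cons_append, List.nil_append] at h ih ⊢
    rw [mergeWord_cons_left_of_forall_lt (fun b hb => h x (by simp) b (by simp [hb])),
      ih (fun a ha b hb => h a (by grind) b hb)]
  | case3 y ys ih =>
    simp only [List.cons_append, List.nil_append] at h ih ⊢
    rw [mergeWord_cons_right_of_forall_lt (fun a ha => h y (by simp) a (by simp [ha])),
      ih (fun a ha b hb => h a (by grind) b hb)]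
  | case4 x xs y ys hxy ih =>
    simp only [List.cons_append] at h ih ⊢
    rw [mergeWord_cons_cons, if_pos hxy,
      ih (fun a ha b hb => h a (by grind) b hb)]
  | case5 x xs y ys hxy ih =>
    simp only [List.cons_append] at h ih ⊢
    rw [mergeWord_cons_cons, if_neg hxy,
      ih (fun a ha b hb => h a (by grind) b hb)]

lemma mergeWord_of_forall_lt {xs ys : List α} (h : ∀ a ∈ xs, ∀ b ∈ ys, a < b) :
    mergeWord xs ys = List.replicate xs.length false ++ List.replicate ys.length true := by
  simpa using mergeWord_append (x₁ := xs) (y₁ := []) (x₂ := []) (y₂ := ys) (by simpa using h)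

lemma mergeWord_of_forall_gt {xs ys : List α} (h : ∀ a ∈ xs, ∀ b ∈ ys, b < a) :
    mergeWord xs ys = List.replicate ys.length true ++ List.replicate xs.length false := by
  simpa using mergeWord_append (x₁ := []) (y₁ := ys) (x₂ := xs) (y₂ := [])
    (by simpa using fun b hb a ha => h a ha b hb)

lemma mergeWord_drop {xs ys : List α} {U V : List Bool} (h : mergeWord xs ys = U ++ V) :
    mergeWord (xs.drop (U.count false)) (ys.drop (U.count true)) = V := by
  fun_induction mergeWord xs ys generalizing U <;> rcases U with _ | ⟨c, U⟩ <;>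
    simp_all [mergeWord_cons_cons, List.replicate_succ]

lemma forall_take_lt_of_mergeWord_eq {xs ys : List α} {y : α} {t : ℕ} {V : List Bool}
    (h : mergeWord xs (y :: ys) = List.replicate t false ++ V) : ∀ a ∈ xs.take t, a < y := by
  induction t generalizing xs with
  | zero => simp
  | succ t ih =>
    rcases xs with _ | ⟨x, xs⟩
    · simp
    rw [mergeWord_cons_cons] at h
    split_ifs at h with hxy
    · simp only [List.replicate_succ, List.cons_append, List.cons.injEq, true_and] at h
      simpa [hxy] using ih h
    · simp [List.replicate_succ] at h

lemma le_of_mergeWord_eq_true_cons {x y : α} {xs ys : List α} {V : List Bool}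
    (h : mergeWord (x :: xs) (y :: ys) = true :: V) : y ≤ x := by
  rw [mergeWord_cons_cons] at h
  split_ifs at h with hxy
  · simp at h
  · exact not_lt.1 hxy

lemma forall_drop_ge_of_mergeWord_eq {xs ys : List α} {y : α} {t : ℕ} {V : List Bool}
    (hxs : xs.Pairwise (· < ·)) (h : mergeWord xs (y :: ys) = List.replicate t false ++ true :: V) :
    ∀ a ∈ xs.drop t, y ≤ a := by
  have hdrop := mergeWord_drop h
  simp only [List.count_replicate_self, List.count_replicate, beq_true, Bool.false_eq_true,
    ↓reduceIte, List.drop_zero] at hdrop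
  intro a ha
  obtain ⟨a₀, as, has⟩ := List.exists_cons_of_ne_nil (List.ne_nil_of_mem ha)
  rw [has] at hdrop ha
  have hya₀ := le_of_mergeWord_eq_true_cons hdrop
  rcases List.mem_cons.1 ha with rfl | ha
  exacts [hya₀, hya₀.trans ((List.pairwise_cons.1 (has ▸ hxs.drop)).1 a ha).le]

lemma mergeWord_eq_of_head_lt {a b : α} {xs ys : List α} {P : List Bool}
    (hP : P.head? = some false) (hab : a < b)
    (h : mergeWord (a :: xs) (b :: ys) = P ∨ mergeWord (b :: ys) (a :: xs) = P) :
    mergeWord (a :: xs) (b :: ys) = P :=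
  h.resolve_right fun h' => by
    rw [mergeWord_cons_cons, if_neg hab.not_gt] at h'
    simp [← h'] at hP

lemma pairWord_insert_left {a : α} {e f : Finset α} (h : ∀ v ∈ e ∪ f, a < v) :
    pairWord (insert a e) f = false :: pairWord e f := by
  have ha : a ∉ e ∪ f := fun ha => lt_irrefl a (h a ha)
  rw [pairWord, Finset.insert_union, Finset.sort_insert _ (fun v hv => (h v hv).le) ha,
    List.map_cons, pairWord, decide_eq_false fun haf => ha (Finset.mem_union_right e haf)]

lemma pairWord_insert_right {a : α} {e f : Finset α} (h : ∀ v ∈ e ∪ f, a < v) :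
    pairWord e (insert a f) = true :: pairWord e f := by
  have ha : a ∉ e ∪ f := fun ha => lt_irrefl a (h a ha)
  rw [pairWord, Finset.union_insert, Finset.sort_insert _ (fun v hv => (h v hv).le) ha,
    List.map_cons, pairWord, decide_eq_true (Finset.mem_insert_self a f)]
  congr 1
  refine List.map_congr_left fun v hv => ?_
  rw [Finset.mem_sort] at hv
  simp [Finset.mem_insert, (h v hv).ne']

lemma pairWord_toFinset {xs ys : List α} (hxs : xs.Pairwise (· < ·)) (hys : ys.Pairwise (· < ·))
    (hd : xs.Disjoint ys) : pairWord xs.toFinset ys.toFinset = mergeWord xs ys := by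
  fun_induction mergeWord xs ys with
  | case1 => simp [pairWord]
  | case2 x xs ih =>
    rw [List.pairwise_cons] at hxs
    rw [List.toFinset_cons, pairWord_insert_left (by simpa using hxs.1),
      ih hxs.2 hys (List.disjoint_nil_right _)]
  | case3 y ys ih =>
    rw [List.pairwise_cons] at hys
    rw [List.toFinset_cons, pairWord_insert_right (by simpa using hys.1),
      ih hxs hys.2 (List.disjoint_nil_left _)]
  | case4 x xs y ys hxy ih =>
    have hx := List.pairwise_cons.1 hxs
    rw [List.toFinset_cons, pairWord_insert_left, ih hx.2 hys (List.disjoint_cons_left.1 hd).2]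
    simp only [Finset.mem_union, List.mem_toFinset, List.mem_cons]
    rintro v (hv | rfl | hv)
    exacts [hx.1 v hv, hxy, hxy.trans ((List.pairwise_cons.1 hys).1 v hv)]
  | case5 x xs y ys hxy ih =>
    have hy := List.pairwise_cons.1 hys
    have hyx : y < x :=
      (not_lt.1 hxy).lt_of_ne fun h => hd List.mem_cons_self (h ▸ List.mem_cons_self)
    rw [List.toFinset_cons (a := y), pairWord_insert_right,
      ih hxs hy.2 (List.disjoint_cons_right.1 hd).2]
    simp only [Finset.mem_union, List.mem_toFinset, List.mem_cons]
    rintro v ((rfl | hv) | hv)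
    exacts [hyx, hyx.trans ((List.pairwise_cons.1 hxs).1 v hv), hy.1 v hv]

lemma Finset.disjoint_sort {e f : Finset α} (h : Disjoint e f) : e.sort.Disjoint f.sort :=
  fun _ hae haf => Finset.disjoint_left.1 h ((Finset.mem_sort _).1 hae) ((Finset.mem_sort _).1 haf)

lemma pairWord_eq_mergeWord_sort {e f : Finset α} (h : Disjoint e f) :
    pairWord e f = mergeWord e.sort f.sort := by
  conv_lhs => rw [← Finset.sort_toFinset e (· ≤ ·), ← Finset.sort_toFinset f (· ≤ ·)]
  exact pairWord_toFinset (Finset.sortedLT_sort e).pairwise (Finset.sortedLT_sort f).pairwise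
    (Finset.disjoint_sort h)

lemma Finset.sort_eq_head!_cons [Inhabited α] {e : Finset α} (he : e.Nonempty) :
    e.sort = e.sort.head! :: e.sort.tail :=
  (List.cons_head!_tail fun h => he.ne_empty <| by
    rw [← Finset.sort_toFinset e (· ≤ ·), h]; rfl).symm

lemma Finset.head!_sort_mem [Inhabited α] {e : Finset α} (he : e.Nonempty) : e.sort.head! ∈ e := by
  rw [← Finset.mem_sort (· ≤ ·), Finset.sort_eq_head!_cons he]
  exact List.mem_cons_self

lemma mergeWord_sort_eq_of_formsPattern [Inhabited α] {P : List Bool} (hP : P.head? = some false)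
    {e f : Finset α} (he : e.Nonempty) (hf : f.Nonempty) (hd : Disjoint e f)
    (hef : FormsPattern P e f) (hlt : e.sort.head! < f.sort.head!) :
    mergeWord e.sort f.sort = P := by
  rw [FormsPattern, pairWord_eq_mergeWord_sort hd, pairWord_eq_mergeWord_sort hd.symm,
    Finset.sort_eq_head!_cons he, Finset.sort_eq_head!_cons hf] at hef
  rw [Finset.sort_eq_head!_cons he, Finset.sort_eq_head!_cons hf]
  exact mergeWord_eq_of_head_lt hP hlt hef

lemma exists_block_false_prefix {x y z : List α} {W : List Bool}
    (hx : x.Pairwise (· < ·)) (hy : y.Pairwise (· < ·))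
    (hxy : mergeWord x y = W) (hxz : mergeWord x z = W) (hyz : mergeWord y z = W)
    (hW : W.head? = some false) : ∃ t, 0 < t ∧ ∃ V, W = block t false ++ V := by
  have hfalse : false ∈ W := List.mem_of_mem_head? hW
  have htrue : true ∈ W := by
    rw [← List.count_pos_iff, ← hxy, (count_mergeWord x y).2, ← (count_mergeWord y z).1, hyz]
    exact List.count_pos_iff.2 hfalse
  obtain ⟨t, V, hWt⟩ := exists_eq_replicate_false_append htrue
  have ht : 0 < t := by
    rcases t with _ | t
    · simp [hWt] at hW
    · omega
  have hcount : t ≤ W.count false := by simp [hWt]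
  have htx : t ≤ x.length := (count_mergeWord x y).1 ▸ hxy ▸ hcount
  have hty : t ≤ y.length := (count_mergeWord y z).1 ▸ hyz ▸ hcount
  have hz : 0 < z.length := by
    rw [← (count_mergeWord x z).2, hxz]
    exact List.count_pos_iff.2 htrue
  obtain ⟨z₀, zs, rfl⟩ := List.exists_cons_of_length_pos hz
  obtain ⟨y₀, ys, rfl⟩ := List.exists_cons_of_length_pos (ht.trans_le hty)
  have hxy₀ : ∀ a ∈ x.take t, ∀ b ∈ y₀ :: ys, a < b := by
    intro a ha b hb
    have hay₀ := forall_take_lt_of_mergeWord_eq (hxy.trans hWt) a ha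
    rcases List.mem_cons.1 hb with rfl | hb
    exacts [hay₀, hay₀.trans ((List.pairwise_cons.1 hy).1 b hb)]
  have hyz₀ : ∀ a ∈ (y₀ :: ys).take t, a < z₀ := forall_take_lt_of_mergeWord_eq (hyz.trans hWt)
  have hz₀x : ∀ a ∈ x.drop t, z₀ ≤ a := forall_drop_ge_of_mergeWord_eq hx (hxz.trans hWt)
  have hsep : ∀ a ∈ x.take t ++ (y₀ :: ys).take t, ∀ b ∈ x.drop t ++ (y₀ :: ys).drop t, a < b := by
    simp only [List.mem_append]
    rintro a (ha | ha) b (hb | hb)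
    · exact hx.rel_of_mem_take_of_mem_drop ha hb
    · exact hxy₀ a ha b (List.mem_of_mem_drop hb)
    · exact (hyz₀ a ha).trans_le (hz₀x b hb)
    · exact hy.rel_of_mem_take_of_mem_drop ha hb
  have hblock : mergeWord (x.take t) ((y₀ :: ys).take t) = block t false := by
    rw [mergeWord_of_forall_lt fun a ha b hb => hxy₀ a ha b (List.mem_of_mem_take hb),
      List.length_take_of_le htx, List.length_take_of_le hty]
    rfl
  refine ⟨t, ht, mergeWord (x.drop t) ((y₀ :: ys).drop t), ?_⟩
  calc W = mergeWord (x.take t ++ x.drop t) ((y₀ :: ys).take t ++ (y₀ :: ys).drop t) := by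
        simp only [List.take_append_drop, hxy]
    _ = _ := by rw [mergeWord_append hsep, hblock]

lemma exists_block_prefix {x y z : List α} {W : List Bool}
    (hx : x.Pairwise (· < ·)) (hy : y.Pairwise (· < ·)) (hz : z.Pairwise (· < ·))
    (hdxy : x.Disjoint y) (hdxz : x.Disjoint z) (hdyz : y.Disjoint z)
    (hxy : mergeWord x y = W) (hxz : mergeWord x z = W) (hyz : mergeWord y z = W)
    (hW : W ≠ []) : ∃ t b V, 0 < t ∧ W = block t b ++ V := by
  obtain ⟨c, W, rfl⟩ := List.exists_cons_of_ne_nil hW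
  cases c
  · obtain ⟨t, ht, V, hV⟩ := exists_block_false_prefix hx hy hxy hxz hyz rfl
    exact ⟨t, false, V, ht, hV⟩
  · have swap {u v : List α} (huv : u.Disjoint v) (h : mergeWord u v = true :: W) :
        mergeWord v u = (true :: W).map not := (mergeWord_swap huv).trans (congrArg _ h)
    obtain ⟨t, ht, V, hV⟩ :=
      exists_block_false_prefix hz hy (swap hdyz hyz) (swap hdxz hxz) (swap hdxy hxy) rfl
    refine ⟨t, true, V.map not, ht, ?_⟩
    simpa [map_not_block, Function.comp_def] using congrArg (List.map not) hV

theorem hasBlockSplitting_of_mergeWord_eq {x y z : List α} {W : List Bool}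
    (hx : x.Pairwise (· < ·)) (hy : y.Pairwise (· < ·)) (hz : z.Pairwise (· < ·))
    (hdxy : x.Disjoint y) (hdxz : x.Disjoint z) (hdyz : y.Disjoint z)
    (hxy : mergeWord x y = W) (hxz : mergeWord x z = W) (hyz : mergeWord y z = W) :
    HasBlockSplitting x.length W := by
  induction hn : x.length using Nat.strong_induction_on generalizing x y z W with
  | _ n ih =>
  have hcount : W.count false = n := by rw [← hxy, (count_mergeWord x y).1, hn]
  rcases eq_or_ne W [] with rfl | hW
  · exact ⟨[], by simp, by simpa using hcount, rfl⟩
  obtain ⟨t, b, V, ht, rfl⟩ := exists_block_prefix hx hy hz hdxy hdxz hdyz hxy hxz hyz hW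
  have htn : t ≤ n := by simp [← hcount]
  have tail {u v : List α} (h : mergeWord u v = block t b ++ V) :
      mergeWord (u.drop t) (v.drop t) = V := by simpa using mergeWord_drop h
  have drop_disjoint {u v : List α} (h : u.Disjoint v) : (u.drop t).Disjoint (v.drop t) :=
    fun _ hu hv => h (List.mem_of_mem_drop hu) (List.mem_of_mem_drop hv)
  have hV := ih (n - t) (by omega) hx.drop hy.drop hz.drop (drop_disjoint hdxy)
    (drop_disjoint hdxz) (drop_disjoint hdyz) (tail hxy) (tail hxz) (tail hyz) (by simp [hn])
  simpa [Nat.add_sub_cancel' htn] using hV.block_append ht b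

end LinearOrder

lemma Finset.exists_lt_lt_of_injOn {ι β : Type*} [LinearOrder β] {s : Finset ι} {f : ι → β}
    (hs : s.card = 3) (hf : Set.InjOn f s) :
    ∃ a ∈ s, ∃ b ∈ s, ∃ c ∈ s, f a < f b ∧ f b < f c := by
  classical
  have hcard : (s.image f).card = 3 := by rwa [Finset.card_image_of_injOn hf]
  have hg (i : Fin 3) : ∃ a ∈ s, f a = (s.image f).orderEmbOfFin hcard i :=
    Finset.mem_image.1 (Finset.orderEmbOfFin_mem _ hcard i)
  obtain ⟨a, ha, hfa⟩ := hg 0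
  obtain ⟨b, hb, hfb⟩ := hg 1
  obtain ⟨c, hc, hfc⟩ := hg 2
  refine ⟨a, ha, b, hb, c, hc, ?_, ?_⟩
  · rw [hfa, hfb]; exact ((s.image f).orderEmbOfFin hcard).strictMono (by decide)
  · rw [hfb, hfc]; exact ((s.image f).orderEmbOfFin hcard).strictMono (by decide)

theorem hasBlockSplitting_of_collectable {r : ℕ} {P : List Bool} (hr : 0 < r)
    (hP : P.head? = some false) (hC : Collectable r P) : HasBlockSplitting r P := by
  obtain ⟨M, hcard, hsize, hdisj, hpat⟩ := hC 3
  have hne {e : Finset ℕ} (he : e ∈ M) : e.Nonempty := Finset.card_pos.1 (hsize e he ▸ hr)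
  have hinj : Set.InjOn (fun e : Finset ℕ => e.sort.head!) M := fun e he f hf hef => by
    by_contra hef'
    have hef : e.sort.head! = f.sort.head! := hef
    exact Finset.disjoint_left.1 (hdisj e he f hf hef') (Finset.head!_sort_mem (hne he))
      (hef ▸ Finset.head!_sort_mem (hne hf))
  have hne' {e f : Finset ℕ} (hlt : e.sort.head! < f.sort.head!) : e ≠ f :=
    fun h => hlt.ne (by rw [h])
  have horient {e f : Finset ℕ} (he : e ∈ M) (hf : f ∈ M) (hlt : e.sort.head! < f.sort.head!) :
      mergeWord e.sort f.sort = P :=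
    mergeWord_sort_eq_of_formsPattern hP (hne he) (hne hf) (hdisj e he f hf (hne' hlt))
      (hpat e he f hf (hne' hlt)) hlt
  have hdisj' {e f : Finset ℕ} (he : e ∈ M) (hf : f ∈ M) (hlt : e.sort.head! < f.sort.head!) :
      e.sort.Disjoint f.sort :=
    Finset.disjoint_sort (hdisj e he f hf (hne' hlt))
  obtain ⟨x, hx, y, hy, z, hz, hxy, hyz⟩ := Finset.exists_lt_lt_of_injOn hcard hinj
  have hsorted (e : Finset ℕ) : e.sort.Pairwise (· < ·) := (Finset.sortedLT_sort e).pairwise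
  simpa [hsize x hx] using hasBlockSplitting_of_mergeWord_eq (hsorted x) (hsorted y) (hsorted z)
    (hdisj' hx hy hxy) (hdisj' hx hz (hxy.trans hyz)) (hdisj' hy hz hyz)
    (horient hx hy hxy) (horient hx hz (hxy.trans hyz)) (horient hy hz hyz)

lemma collectable_of_lists {r : ℕ} {P : List Bool} (hr : 0 < r)
    (h : ∀ k, ∃ E : ℕ → List ℕ, (∀ i < k, (E i).Pairwise (· < ·) ∧ (E i).length = r) ∧
      (∀ i < k, ∀ j < k, i ≠ j → (E i).Disjoint (E j)) ∧
      ∀ i j, i < j → j < k → mergeWord (E i) (E j) = P) :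
    Collectable r P := by
  intro k
  obtain ⟨E, hE, hdisj, hword⟩ := h k
  have hdisj' {i j : ℕ} (hi : i < k) (hj : j < k) (hij : i ≠ j) :
      Disjoint (E i).toFinset (E j).toFinset :=
    List.disjoint_toFinset_iff_disjoint.2 (hdisj i hi j hj hij)
  have hcard {i : ℕ} (hi : i < k) : (E i).toFinset.card = r := by
    rw [List.toFinset_card_of_nodup (hE i hi).1.nodup, (hE i hi).2]
  have hinj : Set.InjOn (fun i => (E i).toFinset) (Finset.range k) := by
    intro i hi j hj hij
    by_contra hne
    simp only [Finset.coe_range, Set.mem_Iio] at hi hj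
    have := hdisj' hi hj hne
    rw [show (E i).toFinset = (E j).toFinset from hij, disjoint_self, Finset.bot_eq_empty] at this
    simpa [this, hr.ne] using hcard hj
  refine ⟨(Finset.range k).image fun i => (E i).toFinset, ?_, ?_, ?_, ?_⟩
  · rw [Finset.card_image_of_injOn hinj, Finset.card_range]
  · simp only [Finset.mem_image, Finset.mem_range]
    rintro _ ⟨i, hi, rfl⟩
    exact hcard hi
  · simp only [Finset.mem_image, Finset.mem_range]
    rintro _ ⟨i, hi, rfl⟩ _ ⟨j, hj, rfl⟩ hne
    exact hdisj' hi hj fun h => hne (h ▸ rfl)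
  · simp only [Finset.mem_image, Finset.mem_range]
    rintro _ ⟨i, hi, rfl⟩ _ ⟨j, hj, rfl⟩ hne
    have hij : i ≠ j := fun h => hne (h ▸ rfl)
    have hpat {i j : ℕ} (hij : i < j) (hj : j < k) :
        pairWord (E i).toFinset (E j).toFinset = P := by
      rw [pairWord_toFinset (hE i (hij.trans hj)).1 (hE j hj).1
        (hdisj i (hij.trans hj) j hj hij.ne), hword i j hij hj]
    rcases hij.lt_or_gt with hij | hij
    exacts [Or.inl (hpat hij hj), Or.inr (hpat hij hi)]

def cliqueEdge (k i : ℕ) : List (ℕ × Bool) → ℕ → List ℕ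
  | [], _ => []
  | (t, b) :: bs, start =>
      List.range' (start + (if b then k - 1 - i else i) * t) t ++ cliqueEdge k i bs (start + k * t)

lemma length_cliqueEdge (k i : ℕ) (bs : List (ℕ × Bool)) (start : ℕ) :
    (cliqueEdge k i bs start).length = (bs.map Prod.fst).sum := by
  induction bs generalizing start with
  | nil => rfl
  | cons p bs ih => simp [cliqueEdge, ih]

lemma le_of_mem_cliqueEdge {k i a start : ℕ} {bs : List (ℕ × Bool)}
    (ha : a ∈ cliqueEdge k i bs start) : start ≤ a := by
  induction bs generalizing start with
  | nil => simp [cliqueEdge] at ha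
  | cons p bs ih =>
    obtain ⟨t, b⟩ := p
    rcases List.mem_append.1 ha with ha | ha
    · exact (List.mem_range'_1.1 ha).1.trans' (Nat.le_add_right _ _)
    · exact (ih ha).trans' (Nat.le_add_right _ _)

lemma lt_of_mem_range'_mul {c s s' t a b : ℕ} (ha : a ∈ List.range' (c + s * t) t) (hs : s < s')
    (hb : c + s' * t ≤ b) : a < b := by
  rw [List.mem_range'_1] at ha
  have : (s + 1) * t ≤ s' * t := Nat.mul_le_mul_right t hs
  nlinarith

lemma slot_lt {k i : ℕ} (hi : i < k) (b : Bool) : (if b then k - 1 - i else i) < k := by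
  split <;> omega

lemma pairwise_cliqueEdge {k i : ℕ} (hi : i < k) (bs : List (ℕ × Bool)) (start : ℕ) :
    (cliqueEdge k i bs start).Pairwise (· < ·) := by
  induction bs generalizing start with
  | nil => exact List.Pairwise.nil
  | cons p bs ih =>
    obtain ⟨t, b⟩ := p
    refine List.pairwise_append.2 ⟨List.pairwise_lt_range', ih _, fun a ha c hc => ?_⟩
    exact lt_of_mem_range'_mul ha (slot_lt hi b) (le_of_mem_cliqueEdge hc)

lemma disjoint_cliqueEdge {k i j : ℕ} (hi : i < k) (hj : j < k) (hij : i ≠ j)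
    (bs : List (ℕ × Bool)) (start : ℕ) :
    (cliqueEdge k i bs start).Disjoint (cliqueEdge k j bs start) := by
  induction bs generalizing start with
  | nil => exact List.disjoint_nil_left _
  | cons p bs ih =>
    obtain ⟨t, b⟩ := p
    have hslot : (if b then k - 1 - i else i) ≠ (if b then k - 1 - j else j) := by
      split <;> omega
    simp only [cliqueEdge, List.disjoint_append_left, List.disjoint_append_right]
    refine ⟨⟨fun a ha ha' => ?_, fun a ha ha' => ?_⟩, fun a ha ha' => ?_, ih _⟩
    · rcases hslot.lt_or_gt with h | h
      exacts [(lt_of_mem_range'_mul ha h (List.mem_range'_1.1 ha').1).ne rfl,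
        (lt_of_mem_range'_mul ha' h (List.mem_range'_1.1 ha).1).ne' rfl]
    · exact (lt_of_mem_range'_mul ha' (slot_lt hj b) (le_of_mem_cliqueEdge ha)).ne' rfl
    · exact (lt_of_mem_range'_mul ha (slot_lt hi b) (le_of_mem_cliqueEdge ha')).ne rfl

lemma mergeWord_cliqueEdge {k i j : ℕ} (hij : i < j) (hj : j < k) (bs : List (ℕ × Bool))
    (start : ℕ) :
    mergeWord (cliqueEdge k i bs start) (cliqueEdge k j bs start) = wordOfBlocks bs := by
  induction bs generalizing start with
  | nil => simp [cliqueEdge, wordOfBlocks]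
  | cons p bs ih =>
    obtain ⟨t, b⟩ := p
    have hsep : ∀ a ∈ List.range' (start + (if b then k - 1 - i else i) * t) t ++
        List.range' (start + (if b then k - 1 - j else j) * t) t,
        ∀ c ∈ cliqueEdge k i bs (start + k * t) ++ cliqueEdge k j bs (start + k * t), a < c := by
      simp only [List.mem_append]
      rintro a (ha | ha) c (hc | hc)
      all_goals exact lt_of_mem_range'_mul ha (slot_lt (by omega) b) (le_of_mem_cliqueEdge hc)
    rw [cliqueEdge, cliqueEdge, mergeWord_append hsep, ih, wordOfBlocks_cons]
    congr 1
    cases b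
    · rw [mergeWord_of_forall_lt fun a ha c hc =>
        lt_of_mem_range'_mul ha (by simpa using hij) (List.mem_range'_1.1 hc).1]
      simp [block]
    · rw [mergeWord_of_forall_gt fun a ha c hc =>
        lt_of_mem_range'_mul hc (by simp; omega) (List.mem_range'_1.1 ha).1]
      simp [block]

theorem collectable_of_hasBlockSplitting {r : ℕ} {P : List Bool} (hr : 0 < r)
    (h : HasBlockSplitting r P) : Collectable r P := by
  obtain ⟨bs, -, hsum, rfl⟩ := h
  exact collectable_of_lists hr fun k => ⟨fun i => cliqueEdge k i bs 0,
    fun i hi => ⟨pairwise_cliqueEdge hi bs 0, (length_cliqueEdge k i bs 0).trans hsum⟩,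
    fun i hi j hj hij => disjoint_cliqueEdge hi hj hij bs 0,
    fun i j hij hj => mergeWord_cliqueEdge hij hj bs 0⟩

lemma finite_of_hasBlockSplitting {n : ℕ} {p : List Bool → Prop}
    (hp : ∀ w, p w → HasBlockSplitting n w) : Finite {w // p w} :=
  ((List.finite_length_eq Bool (2 * n)).subset fun w hw => (hp w hw).length_eq).to_subtype

lemma card_hasBlockSplitting_head (n : ℕ) (b : Bool) :
    Nat.card {w // HasBlockSplitting (n + 1) w ∧ w.head? = some b} =
      ∑ m ∈ Finset.range (n + 1), Nat.card {w // HasBlockSplitting m w} := by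
  have _ (m : Fin (n + 1)) := finite_of_hasBlockSplitting (n := m) fun _ h => h
  rw [← Fin.sum_univ_eq_sum_range (fun m => Nat.card {w // HasBlockSplitting m w}),
    ← Nat.card_sigma]
  refine (Nat.card_eq_of_bijective
    (fun p : Σ m : Fin (n + 1), {w // HasBlockSplitting m w} =>
      ⟨block (n + 1 - p.1) b ++ p.2.1,
        by simpa [Nat.sub_add_cancel p.1.isLt.le] using
          p.2.2.block_append (Nat.sub_pos_of_lt p.1.isLt) b,
        head?_block_append (Nat.sub_pos_of_lt p.1.isLt) b _⟩) ⟨?_, ?_⟩).symm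
  · rintro ⟨m, w, hw⟩ ⟨m', w', hw'⟩ h
    obtain ⟨hmm, -, rfl⟩ := block_append_inj (Nat.sub_pos_of_lt m.isLt)
      (Nat.sub_pos_of_lt m'.isLt) (congrArg Subtype.val h)
    obtain rfl : m = m' := Fin.ext (by have := m.isLt; have := m'.isLt; omega)
    rfl
  · rintro ⟨w, hw, hhead⟩
    obtain ⟨t, b', V, ht, htn, hV, rfl⟩ := exists_block_append_of_hasBlockSplitting hw
    obtain rfl : b' = b := by rwa [head?_block_append ht, Option.some_inj] at hhead
    exact ⟨⟨⟨n + 1 - t, by omega⟩, V, hV⟩, Subtype.ext (by simp [Nat.sub_sub_self htn])⟩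

lemma card_hasBlockSplitting_succ (n : ℕ) :
    Nat.card {w // HasBlockSplitting (n + 1) w} =
      2 * ∑ m ∈ Finset.range (n + 1), Nat.card {w // HasBlockSplitting m w} := by
  have _ (b : Bool) := finite_of_hasBlockSplitting
    (p := fun w => HasBlockSplitting (n + 1) w ∧ w.head? = some b) fun _ h => h.1
  calc Nat.card {w // HasBlockSplitting (n + 1) w}
      = Nat.card (Σ b : Bool, {w // HasBlockSplitting (n + 1) w ∧ w.head? = some b}) :=
        (Nat.card_eq_of_bijective (fun p => ⟨p.2.1, p.2.2.1⟩) ⟨?_, ?_⟩).symm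
    _ = _ := by
      rw [Nat.card_sigma, Fintype.sum_bool, card_hasBlockSplitting_head,
        card_hasBlockSplitting_head, two_mul]
  · rintro ⟨b, w, hw, hb⟩ ⟨b', w', hw', hb'⟩ h
    obtain rfl : w = w' := congrArg Subtype.val h
    obtain rfl : b = b' := Option.some_inj.1 (hb.symm.trans hb')
    rfl
  · rintro ⟨w, hw⟩
    obtain ⟨c, v, rfl⟩ : ∃ c v, w = c :: v := List.exists_cons_of_ne_nil fun h => by
      simpa [h] using hw.length_eq
    exact ⟨⟨c, c :: v, hw, rfl⟩, rfl⟩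

lemma sum_card_hasBlockSplitting (n : ℕ) :
    ∑ m ∈ Finset.range (n + 1), Nat.card {w // HasBlockSplitting m w} = 3 ^ n := by
  induction n with
  | zero => simp [hasBlockSplitting_zero_iff]
  | succ n ih => rw [Finset.sum_range_succ, card_hasBlockSplitting_succ, ih]; ring

lemma isPattern_of_hasBlockSplitting {r : ℕ} {P : List Bool} (h : HasBlockSplitting r P)
    (hP : P.head? = some false) : IsPattern r P :=
  ⟨h.length_eq, h.count_eq true, hP⟩

/-- For `r ≥ 2`, an `r`-pattern is collectable iff it is a concatenation of blocks
`A^t B^t` or `B^t A^t`; consequently there are exactly `3^(r−1)` collectable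
`r`-patterns. -/
theorem collectable_characterization (r : ℕ) (hr : 2 ≤ r) :
    (∀ P : List Bool, IsPattern r P → (Collectable r P ↔ HasBlockSplitting r P)) ∧
    Nat.card {P : List Bool // IsPattern r P ∧ Collectable r P} = 3 ^ (r - 1) := by
  obtain ⟨n, rfl⟩ : ∃ n, r = n + 1 := ⟨r - 1, by omega⟩
  have hiff (P : List Bool) (hP : IsPattern (n + 1) P) :
      Collectable (n + 1) P ↔ HasBlockSplitting (n + 1) P :=
    ⟨hasBlockSplitting_of_collectable n.succ_pos hP.2.2,
      collectable_of_hasBlockSplitting n.succ_pos⟩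
  have hcollectable (P : List Bool) : IsPattern (n + 1) P ∧ Collectable (n + 1) P ↔
      HasBlockSplitting (n + 1) P ∧ P.head? = some false :=
    ⟨fun ⟨hP, hC⟩ => ⟨(hiff P hP).1 hC, hP.2.2⟩,
      fun ⟨hB, hP⟩ => ⟨isPattern_of_hasBlockSplitting hB hP,
        collectable_of_hasBlockSplitting n.succ_pos hB⟩⟩
  refine ⟨hiff, ?_⟩
  rw [Nat.card_congr (Equiv.subtypeEquivRight hcollectable), card_hasBlockSplitting_head,
    sum_card_hasBlockSplitting, Nat.add_sub_cancel]
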